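/- Let τ and d be even positive integers with d ≥ 4, and let k be a positive integer. Define P(X₁,…,X_k) = (2^(τ/2) X₁ - 1)² + Σ_{i=2}^{k} (X_i - X_{i-1}^(d/2))² + X_k^d. Then the point z with z_i = 2^(-(τ/2)(d/2)^(i-1)) for i = 1,…,k lies in the standard simplex Δ_k, and P(z) = 2^(-τ (d/2)^k). Hence min_{Δ_k} P ≤ 2^(-τ (d/2)^k). -/

import Mathlib

/-!
With τ = 2m and d = 2e, the point is z_i = 2^(-m e^(i-1)). Then z_i = z_{i-1}^e and 2^m z_1 = 1, so
every squared term vanishes and P(z) = z_k^(2e) = 2^(-2m e^k). It lies in the simplex because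
m e^(i-1) ≥ 2^(i-1) ≥ i, so z_i ≤ 2^(-i).
-/

open Finset

lemma two_rpow_neg_natCast (n : ℕ) : (2 : ℝ) ^ (-(n : ℝ)) = 2⁻¹ ^ n := by
  rw [Real.rpow_neg zero_le_two, Real.rpow_natCast, inv_pow]

lemma sum_Icc_one_inv_two_pow (k : ℕ) : ∑ i ∈ Icc 1 k, (2⁻¹ : ℝ) ^ i = 1 - 2⁻¹ ^ k := by
  induction k with
  | zero => simp
  | succ k ih => rw [sum_Icc_succ_top (by omega), ih]; ring

lemma le_mul_pow_pred {m e : ℕ} (hm : 1 ≤ m) (he : 2 ≤ e) (i : ℕ) : i ≤ m * e ^ (i - 1) :=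
  calc i ≤ 2 ^ (i - 1) := by have := Nat.lt_two_pow_self (n := i - 1); omega
    _ ≤ e ^ (i - 1) := Nat.pow_le_pow_left he _
    _ ≤ m * e ^ (i - 1) := Nat.le_mul_of_pos_left _ hm

lemma sum_Icc_inv_two_pow_mul_pow_pred_le_one {m e : ℕ} (hm : 1 ≤ m) (he : 2 ≤ e) (k : ℕ) :
    ∑ i ∈ Icc 1 k, (2⁻¹ : ℝ) ^ (m * e ^ (i - 1)) ≤ 1 :=
  calc ∑ i ∈ Icc 1 k, (2⁻¹ : ℝ) ^ (m * e ^ (i - 1))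
      ≤ ∑ i ∈ Icc 1 k, (2⁻¹ : ℝ) ^ i :=
        sum_le_sum fun i _ ↦
          pow_le_pow_of_le_one (by norm_num) (by norm_num) (le_mul_pow_pred hm he i)
    _ = 1 - 2⁻¹ ^ k := sum_Icc_one_inv_two_pow k
    _ ≤ 1 := sub_le_self 1 (by positivity)

lemma pow_mul_pow_pred_pow {M : Type*} [Monoid M] (x : M) (m e : ℕ) {i : ℕ} (hi : 1 ≤ i) :
    (x ^ (m * e ^ (i - 1))) ^ e = x ^ (m * e ^ i) := by
  rw [← pow_mul, mul_assoc, ← pow_succ, Nat.sub_add_cancel hi]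

theorem example_min_le (τ d k : ℕ) (hτ : 0 < τ) (hτe : Even τ)
    (hd : 4 ≤ d) (hde : Even d) (hk : 0 < k)
    (z : ℕ → ℝ) (hz : ∀ i, z i = (2 : ℝ) ^ (-((τ : ℝ) / 2) * ((d : ℝ) / 2) ^ (i - 1))) :
    (∀ i ∈ Finset.Icc 1 k, 0 ≤ z i) ∧ (∑ i ∈ Finset.Icc 1 k, z i) ≤ 1 ∧
      ((2 : ℝ) ^ (τ / 2) * z 1 - 1) ^ 2 +
          (∑ i ∈ Finset.Icc 2 k, (z i - z (i - 1) ^ (d / 2)) ^ 2) + z k ^ d =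
        (2 : ℝ) ^ (-(τ : ℝ) * ((d : ℝ) / 2) ^ k) := by
  obtain ⟨m, rfl⟩ := hτe
  obtain ⟨e, rfl⟩ := hde
  have hz : ∀ i, z i = (2⁻¹ : ℝ) ^ (m * e ^ (i - 1)) := fun i ↦ by
    rw [hz, ← two_rpow_neg_natCast]; push_cast; ring_nf
  have hfirst : (2 : ℝ) ^ ((m + m) / 2) * z 1 = 1 := by
    rw [hz, show (m + m) / 2 = m by omega, Nat.sub_self, pow_zero, mul_one, ← mul_pow,
      mul_inv_cancel₀ two_ne_zero, one_pow]
  have hstep : ∀ i ∈ Icc 2 k, z (i - 1) ^ ((e + e) / 2) = z i := fun i hi ↦ by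
    rw [hz, hz, show (e + e) / 2 = e by omega,
      pow_mul_pow_pred_pow _ _ _ (by simp only [mem_Icc] at hi; omega)]
  have hlast : z k ^ (e + e) = (2 : ℝ) ^ (-((m + m : ℕ) : ℝ) * (((e + e : ℕ) : ℝ) / 2) ^ k) := by
    rw [hz, pow_add, pow_mul_pow_pred_pow _ _ _ hk, ← pow_add, ← add_mul,
      ← two_rpow_neg_natCast]
    push_cast; ring_nf
  refine ⟨fun i _ ↦ by rw [hz]; positivity, ?_, ?_⟩
  · simp only [hz]
    exact sum_Icc_inv_two_pow_mul_pow_pred_le_one (by omega) (by omega) k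
  · rw [hfirst, sum_congr rfl fun i hi ↦ by rw [hstep i hi], hlast]
    simp
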